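/- Let k ≥ 2 and n, s ≥ 0. The number of words w ∈ [k]^n such that des_{[2]}(w) = s (descents whose first element is 1 or 2; equivalently, descents of the form a 2 followed by a 1) is Σ_{a ≥ s, b ≥ s, a+b ≤ n} (k−2)^{n−a−b} · C(n−a−b+s, s) · C(n−b, a−s) · C(n−a, b−s), where the sum is over pairs of integers (a,b) with a ≥ s, b ≥ s, and a+b ≤ n. -/

import Mathlib

open Finset

/-
A descent whose first letter is `1` or `2` is exactly a factor `21`. Splitting off the first letter
of a word shows that the numbers `L n s` of words of length `n` over `[k + 2]` with `s` such factors
satisfy `L (n+2) s + L n s = (k+2) L (n+1) s + L n (s-1)` (the last term only for `s ≥ 1`), which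
together with `L 0` and `L 1` determines them. The closed form `∑_c k^c C(c+s, s) C(n+c+1, 2c+2s+1)`
satisfies the same recurrence, by Pascal's rule applied twice in the upper index. The double sum of
the statement reduces to this closed form: for fixed `c = n - a - b` its inner sum is the upper
Vandermonde identity `∑_{i+j=r} C(t+i, t) C(u+j, u) = C(t+u+1+r, t+u+1)`, the coefficient of `X^r`
in `(1 - X)^{-(t+1)} (1 - X)^{-(u+1)} = (1 - X)^{-(t+u+2)}`.
-/

/-- The number of descents of the word `w : Fin n → Fin k` (encoding a word over the
alphabet `[k] = {1,…,k}`, position `p` carrying the letter `(w p : ℕ) + 1`) whose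
first element satisfies `X`. -/
def descCount (X : ℕ → Prop) [DecidablePred X] {k n : ℕ} (w : Fin n → Fin k) : ℕ :=
  (Finset.univ.filter (fun p : Fin n × Fin n =>
    (p.1 : ℕ) + 1 = (p.2 : ℕ) ∧ (w p.2 : ℕ) < (w p.1 : ℕ) ∧ X ((w p.1 : ℕ) + 1))).card

theorem Nat.choose_add_two_add_choose (N K : ℕ) :
    (N + 2).choose (K + 2) + N.choose (K + 2) = 2 * (N + 1).choose (K + 2) + N.choose K := by
  have h₁ : (N + 2).choose (K + 2) = (N + 1).choose (K + 1) + (N + 1).choose (K + 2) :=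
    Nat.choose_succ_succ' _ _
  have h₂ : (N + 1).choose (K + 2) = N.choose (K + 1) + N.choose (K + 2) :=
    Nat.choose_succ_succ' _ _
  have h₃ : (N + 1).choose (K + 1) = N.choose K + N.choose (K + 1) := Nat.choose_succ_succ' _ _
  omega

theorem Nat.sum_antidiagonal_add_choose_mul_add_choose (t u r : ℕ) :
    ∑ ij ∈ antidiagonal r, (t + ij.1).choose t * (u + ij.2).choose u
      = (t + u + 1 + r).choose (t + u + 1) := by
  have h := congrArg (fun f : (PowerSeries ℤ)ˣ => PowerSeries.coeff r f.val)
    (PowerSeries.invOneSubPow_add ℤ (t + 1) (u + 1))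
  simp only [show t + 1 + (u + 1) = t + u + 1 + 1 by ring,
    PowerSeries.invOneSubPow_val_succ_eq_mk_add_choose, Units.val_mul, PowerSeries.coeff_mul,
    PowerSeries.coeff_mk] at h
  exact_mod_cast h.symm

theorem Finset.sum_Icc_Icc_eq_sum_range_antidiagonal {M : Type*} [AddCommMonoid M]
    (f : ℕ → ℕ → M) (m s : ℕ) :
    ∑ a ∈ Icc s (m + 2 * s), ∑ b ∈ Icc s (m + 2 * s - a), f a b
      = ∑ c ∈ range (m + 1), ∑ ij ∈ antidiagonal (m - c), f (ij.1 + s) (ij.2 + s) := by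
  rw [sum_sigma', sum_sigma']
  refine sum_nbij' (fun x => ⟨m + 2 * s - x.1 - x.2, (x.1 - s, x.2 - s)⟩)
    (fun y => ⟨y.2.1 + s, y.2.2 + s⟩) ?_ ?_ ?_ ?_ ?_
  · rintro ⟨a, b⟩ h
    simp only [mem_sigma, mem_Icc, mem_range, HasAntidiagonal.mem_antidiagonal] at h ⊢
    omega
  · rintro ⟨c, i, j⟩ h
    simp only [mem_sigma, mem_Icc, mem_range, HasAntidiagonal.mem_antidiagonal] at h ⊢
    omega
  · rintro ⟨a, b⟩ h
    simp only [mem_sigma, mem_Icc] at h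
    simp only [Sigma.mk.injEq, heq_eq_eq]
    omega
  · rintro ⟨c, i, j⟩ h
    simp only [mem_sigma, mem_range, HasAntidiagonal.mem_antidiagonal] at h
    simp only [Sigma.mk.injEq, heq_eq_eq, Prod.mk.injEq]
    omega
  · rintro ⟨a, b⟩ h
    simp only [mem_sigma, mem_Icc] at h
    dsimp only
    congr 1 <;> omega

theorem Fintype.sum_fun_fin_succ {α M : Type*} [Fintype α] [AddCommMonoid M]
    {n : ℕ} (f : (Fin (n + 1) → α) → M) : ∑ w, f w = ∑ x, ∑ w : Fin n → α, f (Fin.cons x w) :=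
  ((Fintype.sum_equiv (Fin.consEquiv fun _ => α) _ _ fun _ => rfl).symm).trans
    (Fintype.sum_prod_type _)

section

variable {X : ℕ → Prop} [DecidablePred X] {k n : ℕ}

theorem descCount_eq_card (w : Fin (n + 1) → Fin k) :
    descCount X w = #{i : Fin n | w i.succ < w i.castSucc ∧ X (w i.castSucc + 1)} := by
  symm
  refine card_bij (fun i _ => (i.castSucc, i.succ)) (fun i hi => ?_)
    (fun i _ j _ h => Fin.castSucc_injective _ (congrArg Prod.fst h)) fun p hp => ?_
  · simp only [mem_filter, mem_univ, true_and] at hi ⊢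
    exact ⟨rfl, hi⟩
  · obtain ⟨⟨a, ha⟩, b⟩ := p
    simp only [mem_filter, mem_univ, true_and] at hp
    have han : a < n := by have := b.isLt; omega
    obtain rfl : b = Fin.succ ⟨a, han⟩ := Fin.ext hp.1.symm
    exact ⟨⟨a, han⟩, by simpa using hp.2, rfl⟩

theorem descCount_eq_zero_of_le_one (hn : n ≤ 1) (w : Fin n → Fin k) : descCount X w = 0 := by
  refine card_eq_zero.mpr (filter_eq_empty_iff.mpr fun p _ h => ?_)
  have := p.2.isLt
  omega

theorem descCount_cons (x : Fin k) (w : Fin (n + 1) → Fin k) :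
    descCount X (Fin.cons x w : Fin (n + 2) → Fin k)
      = descCount X w + if w 0 < x ∧ X (x + 1) then 1 else 0 := by
  rw [descCount_eq_card, descCount_eq_card, card_filter, card_filter, Fin.sum_univ_succ, add_comm]
  simp

theorem descCount_cons_of_val_eq_zero {x : Fin k} (hx : (x : ℕ) = 0) (w : Fin n → Fin k) :
    descCount X (Fin.cons x w : Fin (n + 1) → Fin k) = descCount X w := by
  rcases n with _ | n
  · rw [descCount_eq_zero_of_le_one le_rfl, descCount_eq_zero_of_le_one zero_le_one]
  · rw [descCount_cons, if_neg (by rw [Fin.lt_def, hx]; omega), add_zero]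

end

structure DescRecurrence (k : ℕ) (f : ℕ → ℕ → ℕ) : Prop where
  init_zero : ∀ s, f 0 s = if s = 0 then 1 else 0
  init_one : ∀ s, f 1 s = if s = 0 then k + 2 else 0
  step_zero : ∀ n, f (n + 2) 0 + f n 0 = (k + 2) * f (n + 1) 0
  step_succ : ∀ n s, f (n + 2) (s + 1) + f n (s + 1) = (k + 2) * f (n + 1) (s + 1) + f n s

theorem DescRecurrence.unique {k : ℕ} {f g : ℕ → ℕ → ℕ} (hf : DescRecurrence k f)
    (hg : DescRecurrence k g) : f = g := by
  suffices h : ∀ n, f n = g n ∧ f (n + 1) = g (n + 1) from funext fun n => (h n).1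
  intro n
  induction n with
  | zero =>
    exact ⟨funext fun s => by rw [hf.init_zero, hg.init_zero],
      funext fun s => by rw [hf.init_one, hg.init_one]⟩
  | succ n ih =>
    obtain ⟨h₀, h₁⟩ := ih
    refine ⟨h₁, funext fun s => ?_⟩
    cases s with
    | zero =>
      have := hf.step_zero n
      rw [h₀, h₁, ← hg.step_zero n] at this
      exact Nat.add_right_cancel this
    | succ s =>
      have := hf.step_succ n s
      rw [h₀, h₁, ← hg.step_succ n s] at this
      exact Nat.add_right_cancel this

local notation "des₂" => descCount (fun x => 1 ≤ x ∧ x ≤ 2)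

section

variable {k n : ℕ}

-- Letters are stored shifted down by one, so `x = 1 ∧ w 0 = 0` is the factor `21`.
theorem descTwo_cons (x : Fin (k + 2)) (w : Fin (n + 1) → Fin (k + 2)) :
    des₂ (Fin.cons x w : Fin (n + 2) → Fin (k + 2))
      = des₂ w + if x = 1 ∧ w 0 = 0 then 1 else 0 := by
  rw [descCount_cons]
  congr 1
  refine if_congr ?_ rfl rfl
  simp only [Fin.lt_def, Fin.ext_iff, Fin.val_one, Fin.val_zero]
  omega

def wordCount (k n s : ℕ) : ℕ :=
  #{w : Fin n → Fin (k + 2) | des₂ w = s}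

theorem card_head_zero_eq_wordCount (n s : ℕ) :
    #{w : Fin (n + 1) → Fin (k + 2) | w 0 = 0 ∧ des₂ w = s}
      = wordCount k n s := by
  rw [wordCount, card_filter, card_filter, Fintype.sum_fun_fin_succ, Fin.sum_univ_succ]
  simp [descCount_cons_of_val_eq_zero (x := (0 : Fin (k + 2))) rfl]

theorem wordCount_add_two (n s : ℕ) :
    wordCount k (n + 2) s = (k + 1) * wordCount k (n + 1) s
      + ∑ w : Fin (n + 1) → Fin (k + 2),
          if des₂ w + (if w 0 = 0 then 1 else 0) = s then 1 else 0 := by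
  rw [wordCount, card_filter, Fintype.sum_fun_fin_succ, Fintype.sum_eq_add_sum_compl 1, add_comm]
  congr 1
  · have hne : ∀ x ∈ ({1}ᶜ : Finset (Fin (k + 2))), (∑ w : Fin (n + 1) → Fin (k + 2),
        if des₂ (Fin.cons x w : Fin (n + 2) → Fin (k + 2)) = s
        then 1 else 0) = wordCount k (n + 1) s := by
      intro x hx
      rw [mem_compl, mem_singleton] at hx
      simp only [descTwo_cons, hx, false_and, if_false, add_zero, wordCount, card_filter]
    rw [sum_congr rfl hne, sum_const, card_compl, card_singleton, Fintype.card_fin, smul_eq_mul]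
    rfl
  · simp only [descTwo_cons, true_and]

theorem wordCount_add_two_add_wordCount (n s : ℕ) :
    wordCount k (n + 2) s + wordCount k n s = (k + 2) * wordCount k (n + 1) s
      + #{w : Fin (n + 1) → Fin (k + 2) | w 0 = 0 ∧ des₂ w + 1 = s} := by
  have hw : ∀ w : Fin (n + 1) → Fin (k + 2),
      ((if des₂ w + (if w 0 = 0 then 1 else 0) = s then 1 else 0)
        + if w 0 = 0 ∧ des₂ w = s then 1 else 0)
      = (if des₂ w = s then 1 else 0)
        + if w 0 = 0 ∧ des₂ w + 1 = s then 1 else 0 := by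
    intro w
    by_cases h : w 0 = 0 <;> simp [h, add_comm]
  rw [wordCount_add_two, ← card_head_zero_eq_wordCount n s, card_filter, card_filter, add_assoc,
    ← sum_add_distrib, sum_congr rfl fun w _ => hw w, sum_add_distrib, wordCount, card_filter]
  ring

theorem wordCount_descRecurrence (k : ℕ) : DescRecurrence k (wordCount k) where
  init_zero s := by
    rcases s with _ | s <;> simp [wordCount, descCount_eq_zero_of_le_one]
  init_one s := by
    rcases s with _ | s <;> simp [wordCount, descCount_eq_zero_of_le_one]
  step_zero n := by
    simpa using wordCount_add_two_add_wordCount (k := k) n 0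
  step_succ n s := by
    simpa [card_head_zero_eq_wordCount] using wordCount_add_two_add_wordCount (k := k) n (s + 1)

end

def descFormulaTerm (k n s c : ℕ) : ℕ :=
  k ^ c * (c + s).choose s * (n + c + 1).choose (2 * c + 2 * s + 1)

def descFormula (k n s : ℕ) : ℕ :=
  ∑ c ∈ range (n + 1), descFormulaTerm k n s c

namespace descFormula

variable {k n s : ℕ}

theorem term_eq_zero {c : ℕ} (hc : n < c + 2 * s) : descFormulaTerm k n s c = 0 :=
  mul_eq_zero_of_right _ (Nat.choose_eq_zero_of_lt (by omega))

theorem eq_sum_range {N : ℕ} (hN : n < N + 2 * s) :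
    descFormula k n s = ∑ c ∈ range N, descFormulaTerm k n s c := by
  have trim : ∀ N, n < N + 2 * s →
      ∑ c ∈ range N, descFormulaTerm k n s c
        = ∑ c ∈ range (n + 1 - 2 * s), descFormulaTerm k n s c :=
    fun N hN => (sum_subset (range_subset_range.mpr (by omega)) fun c _ hc =>
      term_eq_zero (by rw [mem_range] at hc; omega)).symm
  rw [descFormula, trim _ (by omega), trim _ hN]

theorem init_zero : descFormula k 0 s = if s = 0 then 1 else 0 := by
  rcases s with _ | s <;> simp [descFormula, descFormulaTerm, Nat.choose_eq_zero_of_lt]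

theorem init_one : descFormula k 1 s = if s = 0 then k + 2 else 0 := by
  rcases s with _ | s
  · simp [descFormula, descFormulaTerm, sum_range_succ, add_comm]
  · simp [descFormula, descFormulaTerm, sum_range_succ, Nat.choose_eq_zero_of_lt,
      show 3 < 2 + 2 * (s + 1) + 1 by omega]

theorem term_step_zero_zero (n : ℕ) :
    descFormulaTerm k (n + 2) 0 0 + descFormulaTerm k n 0 0
      = 2 * descFormulaTerm k (n + 1) 0 0 := by
  simp only [descFormulaTerm, pow_zero, add_zero, Nat.choose_self, mul_one, mul_zero, zero_add,
    Nat.choose_one_right, one_mul]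
  ring

theorem term_step_zero_succ (n c : ℕ) :
    descFormulaTerm k (n + 2) 0 (c + 1) + descFormulaTerm k n 0 (c + 1)
      = 2 * descFormulaTerm k (n + 1) 0 (c + 1) + k * descFormulaTerm k (n + 1) 0 c := by
  simp only [descFormulaTerm, Nat.choose_zero_right]
  linear_combination (norm := ring_nf)
    k ^ (c + 1) * Nat.choose_add_two_add_choose (n + c + 2) (2 * c + 1)

theorem term_step_succ_zero (n s : ℕ) :
    descFormulaTerm k (n + 2) (s + 1) 0 + descFormulaTerm k n (s + 1) 0
      = 2 * descFormulaTerm k (n + 1) (s + 1) 0 + descFormulaTerm k n s 0 := by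
  simp only [descFormulaTerm, zero_add, Nat.choose_self]
  linear_combination (norm := ring_nf) Nat.choose_add_two_add_choose (n + 1) (2 * s + 1)

theorem term_step_succ_succ (n s c : ℕ) :
    descFormulaTerm k (n + 2) (s + 1) (c + 1) + descFormulaTerm k n (s + 1) (c + 1)
      = 2 * descFormulaTerm k (n + 1) (s + 1) (c + 1) + k * descFormulaTerm k (n + 1) (s + 1) c
        + descFormulaTerm k n s (c + 1) := by
  simp only [descFormulaTerm]
  linear_combination (norm := ring_nf)
    k ^ (c + 1) * (c + s + 2).choose (s + 1)
        * Nat.choose_add_two_add_choose (n + c + 2) (2 * c + 2 * s + 3)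
      + k ^ (c + 1) * (n + c + 2).choose (2 * c + 2 * s + 3) * Nat.choose_succ_succ' (c + s + 1) s

theorem step_zero (n : ℕ) :
    descFormula k (n + 2) 0 + descFormula k n 0 = (k + 2) * descFormula k (n + 1) 0 := by
  calc descFormula k (n + 2) 0 + descFormula k n 0
      = ∑ c ∈ range (n + 3), (descFormulaTerm k (n + 2) 0 c + descFormulaTerm k n 0 c) := by
        rw [eq_sum_range (N := n + 3) (by omega), eq_sum_range (N := n + 3) (by omega),
          sum_add_distrib]
    _ = ∑ c ∈ range (n + 2), (2 * descFormulaTerm k (n + 1) 0 (c + 1)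
          + k * descFormulaTerm k (n + 1) 0 c) + 2 * descFormulaTerm k (n + 1) 0 0 := by
        simp only [sum_range_succ', term_step_zero_succ, term_step_zero_zero]
    _ = 2 * ∑ c ∈ range (n + 3), descFormulaTerm k (n + 1) 0 c
          + k * ∑ c ∈ range (n + 2), descFormulaTerm k (n + 1) 0 c := by
        rw [sum_range_succ' _ (n + 2), sum_add_distrib, ← mul_sum, ← mul_sum]
        ring
    _ = (k + 2) * descFormula k (n + 1) 0 := by
        rw [← eq_sum_range (by omega), ← eq_sum_range (by omega)]
        ring

theorem step_succ (n s : ℕ) :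
    descFormula k (n + 2) (s + 1) + descFormula k n (s + 1)
      = (k + 2) * descFormula k (n + 1) (s + 1) + descFormula k n s := by
  calc descFormula k (n + 2) (s + 1) + descFormula k n (s + 1)
      = ∑ c ∈ range (n + 3), (descFormulaTerm k (n + 2) (s + 1) c
          + descFormulaTerm k n (s + 1) c) := by
        rw [eq_sum_range (N := n + 3) (by omega), eq_sum_range (N := n + 3) (by omega),
          sum_add_distrib]
    _ = ∑ c ∈ range (n + 2), (2 * descFormulaTerm k (n + 1) (s + 1) (c + 1)
          + k * descFormulaTerm k (n + 1) (s + 1) c + descFormulaTerm k n s (c + 1))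
          + (2 * descFormulaTerm k (n + 1) (s + 1) 0 + descFormulaTerm k n s 0) := by
        simp only [sum_range_succ', term_step_succ_succ, term_step_succ_zero]
    _ = 2 * ∑ c ∈ range (n + 3), descFormulaTerm k (n + 1) (s + 1) c
          + k * ∑ c ∈ range (n + 2), descFormulaTerm k (n + 1) (s + 1) c
          + ∑ c ∈ range (n + 3), descFormulaTerm k n s c := by
        rw [sum_range_succ' _ (n + 2), sum_range_succ' _ (n + 2), sum_add_distrib, sum_add_distrib,
          ← mul_sum, ← mul_sum]
        ring
    _ = (k + 2) * descFormula k (n + 1) (s + 1) + descFormula k n s := by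
        rw [← eq_sum_range (by omega), ← eq_sum_range (by omega), ← eq_sum_range (by omega)]
        ring

theorem descRecurrence (k : ℕ) : DescRecurrence k (descFormula k) :=
  ⟨fun _ => init_zero, fun _ => init_one, step_zero, step_succ⟩

end descFormula

theorem sum_Icc_Icc_eq_descFormula (k n s : ℕ) :
    ∑ a ∈ Icc s n, ∑ b ∈ Icc s (n - a),
      k ^ (n - a - b) * (n - a - b + s).choose s * (n - b).choose (a - s) * (n - a).choose (b - s)
      = descFormula k n s := by
  obtain hn | hn := lt_or_ge n (2 * s)
  · rw [descFormula, sum_eq_zero fun c _ => descFormula.term_eq_zero (by omega)]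
    refine sum_eq_zero fun a ha => ?_
    rw [mem_Icc] at ha
    rw [Icc_eq_empty (by omega), sum_empty]
  obtain ⟨m, rfl⟩ : ∃ m, n = m + 2 * s := ⟨n - 2 * s, by omega⟩
  rw [sum_Icc_Icc_eq_sum_range_antidiagonal, descFormula.eq_sum_range (N := m + 1) (by omega)]
  refine sum_congr rfl fun c hc => ?_
  rw [mem_range] at hc
  calc ∑ ij ∈ antidiagonal (m - c), k ^ (m + 2 * s - (ij.1 + s) - (ij.2 + s))
          * (m + 2 * s - (ij.1 + s) - (ij.2 + s) + s).choose s
          * (m + 2 * s - (ij.2 + s)).choose (ij.1 + s - s)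
          * (m + 2 * s - (ij.1 + s)).choose (ij.2 + s - s)
      = ∑ ij ∈ antidiagonal (m - c), k ^ c * (c + s).choose s
          * ((c + s + ij.1).choose (c + s) * (c + s + ij.2).choose (c + s)) := by
        refine sum_congr rfl fun ij hij => ?_
        rw [HasAntidiagonal.mem_antidiagonal] at hij
        rw [show m + 2 * s - (ij.1 + s) - (ij.2 + s) = c by omega,
          show m + 2 * s - (ij.2 + s) = c + s + ij.1 by omega,
          show m + 2 * s - (ij.1 + s) = c + s + ij.2 by omega, Nat.add_sub_cancel,
          Nat.add_sub_cancel, Nat.choose_symm_add (a := c + s) (b := ij.1),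
          Nat.choose_symm_add (a := c + s) (b := ij.2)]
        ring
    _ = descFormulaTerm k (m + 2 * s) s c := by
        rw [← mul_sum, Nat.sum_antidiagonal_add_choose_mul_add_choose, descFormulaTerm,
          show c + s + (c + s) + 1 + (m - c) = m + 2 * s + c + 1 by omega,
          show c + s + (c + s) + 1 = 2 * c + 2 * s + 1 by ring]

theorem stmt_7 (k n s : ℕ) (hk : 2 ≤ k) :
    (Finset.univ.filter (fun w : Fin n → Fin k =>
        descCount (fun x => 1 ≤ x ∧ x ≤ 2) w = s)).card
      = ∑ a ∈ Finset.Icc s n, ∑ b ∈ Finset.Icc s (n - a),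
          (k - 2) ^ (n - a - b) * (n - a - b + s).choose s
            * (n - b).choose (a - s) * (n - a).choose (b - s) := by
  obtain ⟨k, rfl⟩ : ∃ k', k = k' + 2 := ⟨k - 2, by omega⟩
  rw [Nat.add_sub_cancel, sum_Icc_Icc_eq_descFormula,
    ← (wordCount_descRecurrence k).unique (descFormula.descRecurrence k)]
  rfl
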